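/- arXiv:math/0107130 — 3 statements merged into one kernel-verified Lean document; each statement's English description precedes it below -/
import Mathlib

section
/- For fixed τ ∈ S_k and n ≥ k, the number of involutions in S_n containing τ as a subsequence equals the sum over j ∈ J(τ) of C(n-k, k-j) · t_{n-2k+j}, where J(τ) consists of 0 together with all j ∈ {1,…,k} such that the pattern of τ_1…τ_j is an involution in S_j. -/
open Equiv Finset

/-- The number of involutions in the symmetric group S_n. -/
def numInvolutions (n : ℕ) : ℕ :=
  (Finset.univ.filter fun π : Equiv.Perm (Fin n) => π * π = 1).card

/-- `π ∈ S_n` contains `τ ∈ S_k` as a subsequence. -/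
def ContainsSubseq {n k : ℕ} (π : Equiv.Perm (Fin n)) (τ : Equiv.Perm (Fin k)) : Prop :=
  ∃ ι : Fin k → Fin n, StrictMono ι ∧ ∀ m : Fin k, (π (ι m) : ℕ) = (τ m : ℕ)

/-- `p` is the pattern (order-preserving relabeling) of the word `w`. -/
def IsPattern {j : ℕ} {α : Type*} [LinearOrder α] (w : Fin j → α) (p : Equiv.Perm (Fin j)) : Prop :=
  ∀ a b : Fin j, p a ≤ p b ↔ w a ≤ w b

/-- The pattern of `τ_1 … τ_j` is an involution in S_j. -/
def InitPatternIsInvolution {k : ℕ} (τ : Equiv.Perm (Fin k)) (j : ℕ) : Prop :=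
  ∃ hjk : j ≤ k, ∃ p : Equiv.Perm (Fin j),
    IsPattern (fun m : Fin j => τ (Fin.castLE hjk m)) p ∧ p * p = 1

/-- The j-set of `τ`. -/
def JSet {k : ℕ} (τ : Equiv.Perm (Fin k)) : Set ℕ :=
  {0} ∪ {j | 1 ≤ j ∧ InitPatternIsInvolution τ j}

open scoped Classical in
/-- The j-set of `τ`, as a finset. -/
noncomputable def JFinset {k : ℕ} (τ : Equiv.Perm (Fin k)) : Finset ℕ :=
  (Finset.range (k + 1)).filter fun j => j ∈ JSet τ

/-- Concatenation of decreasing blocks of consecutive integers starting above `s`. -/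
def layersFrom : ℕ → List ℕ → List ℕ
  | _, [] => []
  | s, a :: rest => ((List.range a).reverse.map fun t => s + t + 1) ++ layersFrom (s + a) rest

/-- `τ` is a layered permutation. -/
def IsLayered {k : ℕ} (τ : Equiv.Perm (Fin k)) : Prop :=
  ∃ comp : List ℕ, (∀ a ∈ comp, 0 < a) ∧ comp.sum = k ∧
    List.ofFn (fun m : Fin k => (τ m : ℕ) + 1) = layersFrom 0 comp

open scoped Classical

open Function

/-!
An involution `π` holds the value `τ m` at position `π (τ m)`, so it contains `τ` exactly
when `m ↦ π (τ m)` is increasing, and then the occurrence is unique. Let `C` be the set of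
positions `≥ k` that hold a value `< k`, and `j = k - |C|`. Monotonicity forces `π (τ m) < k`
exactly for `m < j`, so `π` permutes `τ 0, …, τ (j-1)` by the pattern of `τ_1 … τ_j`, which
is therefore an involution. Conversely, for each such `j` and each `(k-j)`-subset `C` of
`{k, …, n-1}` the occurrence of `τ` is determined by `j` and `C`, hence so is `π` on
`{0, …, k-1} ∪ C`; on the remaining `n + j - 2k` points `π` is an arbitrary involution.
-/

theorem Equiv.Perm.apply_apply_of_mul_self {α : Type*} {π : Perm α} (hπ : π * π = 1)
    (x : α) : π (π x) = x :=
  congr($hπ x)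

section Involutions

variable {α : Type*} [Fintype α] [DecidableEq α]

theorem card_involutions_eq_numInvolutions :
    #{σ : Perm α | σ * σ = 1} = numInvolutions (Fintype.card α) := by
  let e := (Fintype.equivFin α).permCongrHom
  refine card_equiv e.toEquiv fun σ => ?_
  simp only [mem_filter, mem_univ, true_and]
  exact (map_eq_one_iff e e.injective).symm.trans (by rw [map_mul]; rfl)

theorem card_involutions_eqOn_of_stable {ρ : Perm α} (hρ : ρ * ρ = 1) {A : Finset α}
    (hA : ∀ a, ρ a ∈ A ↔ a ∈ A) :
    #{π : Perm α | π * π = 1 ∧ ∀ a ∈ A, π a = ρ a}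
      = #{σ : Perm {x // x ∉ A} | σ * σ = 1} := by
  have stable : ∀ π : Perm α, π * π = 1 → (∀ a ∈ A, π a = ρ a) →
      ∀ x, π x ∉ A ↔ x ∉ A := by
    intro π hπ hπA x
    refine not_congr ⟨fun hx => ?_, fun hx => hπA x hx ▸ (hA x).2 hx⟩
    rw [← Perm.apply_apply_of_mul_self hπ x, hπA _ hx]
    exact (hA _).2 hx
  refine card_bij'
    (fun π hπ => π.subtypePerm (stable π (mem_filter.1 hπ).2.1 (mem_filter.1 hπ).2.2))
    (fun σ _ => (ρ.subtypePerm hA).subtypeCongr σ) ?_ ?_ ?_ ?_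
  · intro π hπ
    simp only [mem_filter, mem_univ, true_and] at hπ ⊢
    ext x
    simp [hπ.1]
  · intro σ hσ
    simp only [mem_filter, mem_univ, true_and] at hσ ⊢
    refine ⟨?_, fun a ha => Perm.subtypeCongr.left_apply _ _ ha⟩
    ext x
    by_cases hx : x ∈ A
    · simp [Perm.subtypeCongr.left_apply _ _ hx, Perm.subtypeCongr.left_apply _ _ ((hA x).2 hx),
        Perm.apply_apply_of_mul_self hρ]
    · simp [Perm.subtypeCongr.right_apply _ _ hx,
        Perm.subtypeCongr.right_apply _ _ (σ ⟨x, hx⟩).2, Perm.apply_apply_of_mul_self hσ]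
  · intro π hπ
    simp only [mem_filter, mem_univ, true_and] at hπ
    ext x
    by_cases hx : x ∈ A
    · simp [Perm.subtypeCongr.left_apply _ _ hx, hπ.2 x hx]
    · simp [Perm.subtypeCongr.right_apply _ _ hx]
  · intro σ _
    ext x
    simp [Perm.subtypeCongr.right_apply _ _ x.2]

theorem card_involutions_eqOn {ρ : Perm α} (hρ : ρ * ρ = 1) (B : Finset α) :
    #{π : Perm α | π * π = 1 ∧ ∀ b ∈ B, π b = ρ b}
      = numInvolutions (Fintype.card α - #(B ∪ B.image ρ)) := by
  have hρρ := Perm.apply_apply_of_mul_self hρ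
  have hA : ∀ a, ρ a ∈ B ∪ B.image ρ ↔ a ∈ B ∪ B.image ρ := by
    intro a
    simp only [mem_union, mem_image]
    constructor
    · rintro (h | ⟨b, hb, hba⟩)
      · exact Or.inr ⟨_, h, hρρ a⟩
      · exact Or.inl (ρ.injective hba ▸ hb)
    · rintro (h | ⟨b, hb, rfl⟩)
      · exact Or.inr ⟨a, h, rfl⟩
      · exact Or.inl ((hρρ b).symm ▸ hb)
  have hB : ∀ π : Perm α, π * π = 1 →
      ((∀ b ∈ B, π b = ρ b) ↔ ∀ a ∈ B ∪ B.image ρ, π a = ρ a) := by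
    intro π hπ
    refine ⟨fun h a ha => ?_, fun h b hb => h b (mem_union_left _ hb)⟩
    rcases mem_union.1 ha with ha | ha
    · exact h a ha
    obtain ⟨b, hb, rfl⟩ := mem_image.1 ha
    rw [hρρ, ← h b hb, Perm.apply_apply_of_mul_self hπ]
  rw [filter_congr fun π _ => and_congr_right (hB π), card_involutions_eqOn_of_stable hρ hA,
    card_involutions_eq_numInvolutions, Fintype.card_subtype_compl, Fintype.card_coe]

end Involutions

theorem exists_involution_apply_eq {ι α : Type*} {u v : ι → α} (hu : Injective u)
    (hv : Injective v) (huv : ∀ i i', u i = v i' → u i' = v i) :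
    ∃ ρ : Perm α, ρ * ρ = 1 ∧ ∀ i, ρ (u i) = v i := by
  let f : α → α := fun x =>
    if h : ∃ i, u i = x then v h.choose else if h : ∃ i, v i = x then u h.choose else x
  have hfu : ∀ i, f (u i) = v i := by
    intro i
    have h : ∃ i', u i' = u i := ⟨i, rfl⟩
    simp only [f, dif_pos h, hu h.choose_spec]
  have hfv : ∀ i, f (v i) = u i := by
    intro i
    by_cases h : ∃ i', u i' = v i
    · obtain ⟨i', hi'⟩ := h
      rw [← hi', hfu, huv _ _ hi']
    · have h' : ∃ i', v i' = v i := ⟨i, rfl⟩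
      simp only [f, dif_neg h, dif_pos h', hv h'.choose_spec]
  have hf : Involutive f := by
    intro x
    by_cases hx : ∃ i, u i = x
    · obtain ⟨i, rfl⟩ := hx
      rw [hfu, hfv]
    by_cases hx' : ∃ i, v i = x
    · obtain ⟨i, rfl⟩ := hx'
      rw [hfv, hfu]
    have hfx : f x = x := by simp only [f, dif_neg hx, dif_neg hx']
    rw [hfx, hfx]
  exact ⟨hf.toPerm f, Perm.ext hf, hfu⟩

theorem Fin.mem_iff_lt_card_of_isLowerSet {k : ℕ} {s : Finset (Fin k)}
    (hs : IsLowerSet (s : Set (Fin k))) (m : Fin k) : m ∈ s ↔ (m : ℕ) < #s := by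
  rcases hs.eq_univ_or_Iio with h | ⟨a, h⟩
  · rw [coe_eq_univ.1 h]
    simp
  · rw [← coe_Iio, coe_inj] at h
    subst h
    rw [mem_Iio, Fin.card_Iio, Fin.lt_def]

theorem IsPattern.lt_iff {j : ℕ} {α : Type*} [LinearOrder α] {w : Fin j → α}
    {p : Perm (Fin j)} (hp : IsPattern w p) (a b : Fin j) : p a < p b ↔ w a < w b := by
  simp only [lt_iff_not_ge, hp b a]

theorem isPattern_of_apply_eq {j : ℕ} {α β : Type*} [LinearOrder α] [LinearOrder β]
    {w : Fin j → α} {p : Perm (Fin j)} {e : α → β} {g : Fin j → β} (he : StrictMono e)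
    (hg : StrictMono g) (h : ∀ a, e (w a) = g (p a)) : IsPattern w p := by
  intro a b
  rw [← he.le_iff_le, h, h, hg.le_iff_le]

def crossing (k : ℕ) {n : ℕ} (π : Perm (Fin n)) : Finset (Fin n) :=
  {x | k ≤ (x : ℕ) ∧ (π x : ℕ) < k}

theorem card_crossing_le (k : ℕ) {n : ℕ} (π : Perm (Fin n)) : #(crossing k π) ≤ k :=
  calc #(crossing k π) ≤ #({x | (x : ℕ) < k} : Finset (Fin n)) :=
        card_le_card_of_injOn π (fun x hx => by simp_all [crossing]) π.injective.injOn
    _ ≤ k := by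
        rw [Fin.card_filter_val_lt]
        exact min_le_right _ _

-- For an involution `π`, `occurrence hn τ π m` is the position of the value `τ m`.
def occurrence {k n : ℕ} (hn : k ≤ n) (τ : Perm (Fin k)) (π : Perm (Fin n)) (m : Fin k) :
    Fin n :=
  π (Fin.castLE hn (τ m))

section TargetOccurrence

variable {k n j : ℕ} (hn : k ≤ n) (τ : Perm (Fin k)) (hjk : j ≤ k) (p : Perm (Fin j))
  {C : Finset (Fin n)} (hC : #C = k - j)

/-- Where an involution must hold `τ 0, …, τ (k-1)` if it permutes `τ 0, …, τ (j-1)` by `p`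
and its crossing is `C`. -/
def targetOccurrence (m : Fin k) : Fin n :=
  if h : (m : ℕ) < j then Fin.castLE hn (τ (Fin.castLE hjk (p ⟨m, h⟩)))
  else C.orderEmbOfFin hC ⟨m - j, by omega⟩

theorem targetOccurrence_of_lt {m : Fin k} (h : (m : ℕ) < j) :
    targetOccurrence hn τ hjk p hC m = Fin.castLE hn (τ (Fin.castLE hjk (p ⟨m, h⟩))) :=
  dif_pos h

theorem targetOccurrence_of_le {m : Fin k} (h : j ≤ (m : ℕ)) :
    targetOccurrence hn τ hjk p hC m = C.orderEmbOfFin hC ⟨m - j, by omega⟩ :=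
  dif_neg (not_lt.2 h)

variable {hn τ hjk p hC}

theorem strictMono_targetOccurrence (hCk : ∀ x ∈ C, k ≤ (x : ℕ))
    (hpat : IsPattern (fun m : Fin j => τ (Fin.castLE hjk m)) p) (hp : p * p = 1) :
    StrictMono (targetOccurrence hn τ hjk p hC) := by
  intro a b hab
  have hab' : (a : ℕ) < b := hab
  by_cases hb : (b : ℕ) < j
  · rw [targetOccurrence_of_lt _ _ _ _ _ (hab'.trans hb), targetOccurrence_of_lt _ _ _ _ _ hb]
    apply Fin.strictMono_castLE hn
    rw [← hpat.lt_iff, Perm.apply_apply_of_mul_self hp, Perm.apply_apply_of_mul_self hp]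
    exact hab
  rw [targetOccurrence_of_le _ _ _ _ _ (not_lt.1 hb)]
  by_cases ha : (a : ℕ) < j
  · rw [targetOccurrence_of_lt _ _ _ _ _ ha, Fin.lt_def]
    exact (τ _).isLt.trans_le (hCk _ (C.orderEmbOfFin_mem hC _))
  · rw [targetOccurrence_of_le _ _ _ _ _ (not_lt.1 ha)]
    exact (C.orderEmbOfFin hC).strictMono (by rw [Fin.lt_def]; dsimp only; omega)

theorem mem_range_targetOccurrence_iff (hCk : ∀ x ∈ C, k ≤ (x : ℕ)) (x : Fin n) :
    k ≤ (x : ℕ) ∧ x ∈ Set.range (targetOccurrence hn τ hjk p hC) ↔ x ∈ C := by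
  constructor
  · rintro ⟨hx, m, rfl⟩
    by_cases hm : (m : ℕ) < j
    · rw [targetOccurrence_of_lt _ _ _ _ _ hm] at hx
      exact absurd (τ _).isLt (not_lt.2 hx)
    · rw [targetOccurrence_of_le _ _ _ _ _ (not_lt.1 hm)]
      exact C.orderEmbOfFin_mem hC _
  · intro hx
    obtain ⟨i, rfl⟩ : x ∈ Set.range (C.orderEmbOfFin hC) := by
      rw [C.range_orderEmbOfFin hC]
      exact hx
    refine ⟨hCk _ hx, ⟨j + i, by omega⟩, ?_⟩
    rw [targetOccurrence_of_le _ _ _ _ _ (Nat.le_add_right _ _)]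
    congr 2
    simp

theorem castLE_apply_eq_targetOccurrence_comm (hCk : ∀ x ∈ C, k ≤ (x : ℕ)) (hp : p * p = 1)
    {m m' : Fin k} (h : Fin.castLE hn (τ m) = targetOccurrence hn τ hjk p hC m') :
    Fin.castLE hn (τ m') = targetOccurrence hn τ hjk p hC m := by
  by_cases hm' : (m' : ℕ) < j
  · rw [targetOccurrence_of_lt _ _ _ _ _ hm'] at h
    obtain rfl := τ.injective (Fin.castLE_injective hn h)
    rw [targetOccurrence_of_lt _ _ _ _ _ (m := Fin.castLE hjk (p ⟨m', hm'⟩))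
      (p ⟨m', hm'⟩).isLt]
    simp only [Fin.val_castLE, Fin.eta, Perm.apply_apply_of_mul_self hp]
    rfl
  · rw [targetOccurrence_of_le _ _ _ _ _ (not_lt.1 hm')] at h
    have := hCk _ (C.orderEmbOfFin_mem hC ⟨m' - j, by omega⟩)
    rw [← h] at this
    exact absurd (τ m).isLt (not_lt.2 this)

end TargetOccurrence

section Occurrence

variable {k n : ℕ} {hn : k ≤ n} {τ : Perm (Fin k)} {π : Perm (Fin n)}

variable (hn τ) in
theorem exists_castLE_apply_eq {x : Fin n} (hx : (x : ℕ) < k) : ∃ m, Fin.castLE hn (τ m) = x :=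
  ⟨τ.symm (x.castLT hx), by simp [Fin.ext_iff]⟩

variable (hn) in
theorem containsSubseq_iff_strictMono_occurrence (hπ : π * π = 1) :
    ContainsSubseq π τ ↔ StrictMono (occurrence hn τ π) := by
  refine ⟨fun ⟨ι, hι, hιτ⟩ => ?_, fun h => ⟨_, h, fun m => ?_⟩⟩
  · convert hι using 1
    funext m
    rw [occurrence, ← Perm.apply_apply_of_mul_self hπ (ι m)]
    exact congrArg π (Fin.ext (hιτ m)).symm
  · rw [occurrence, Perm.apply_apply_of_mul_self hπ]
    rfl

theorem mem_range_occurrence (hπ : π * π = 1) (x : Fin n) :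
    x ∈ Set.range (occurrence hn τ π) ↔ (π x : ℕ) < k := by
  constructor
  · rintro ⟨m, rfl⟩
    rw [occurrence, Perm.apply_apply_of_mul_self hπ]
    exact (τ m).isLt
  · intro hx
    obtain ⟨m, hm⟩ := exists_castLE_apply_eq hn τ hx
    exact ⟨m, by rw [occurrence, hm, Perm.apply_apply_of_mul_self hπ]⟩

variable (hn τ) in
theorem mem_crossing (hπ : π * π = 1) (x : Fin n) :
    x ∈ crossing k π ↔ k ≤ (x : ℕ) ∧ x ∈ Set.range (occurrence hn τ π) := by
  rw [mem_range_occurrence hπ, crossing, mem_filter, and_iff_right (mem_univ x)]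

theorem crossing_eq_of_occurrence_eq {ρ : Perm (Fin n)} (hπ : π * π = 1) (hρ : ρ * ρ = 1)
    (h : occurrence hn τ π = occurrence hn τ ρ) : crossing k π = crossing k ρ := by
  ext x
  rw [mem_crossing hn τ hπ, mem_crossing hn τ hρ, h]

variable (hn τ) in
theorem crossing_eq_image (hπ : π * π = 1) :
    crossing k π
      = ({m | k ≤ (occurrence hn τ π m : ℕ)} : Finset (Fin k)).image
          (occurrence hn τ π) := by
  ext x
  simp only [mem_crossing hn τ hπ, mem_image, mem_filter, mem_univ, true_and, Set.mem_range]
  constructor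
  · rintro ⟨hx, m, rfl⟩
    exact ⟨m, hx, rfl⟩
  · rintro ⟨m, hm, rfl⟩
    exact ⟨hm, m, rfl⟩

theorem occurrence_lt_iff (hπ : π * π = 1) (hocc : StrictMono (occurrence hn τ π))
    (m : Fin k) : (occurrence hn τ π m : ℕ) < k ↔ (m : ℕ) < k - #(crossing k π) := by
  let L : Finset (Fin k) := {m | (occurrence hn τ π m : ℕ) < k}
  have hL : IsLowerSet (L : Set (Fin k)) := fun a b hba ha => by
    simp only [L, mem_coe, mem_filter, mem_univ, true_and] at ha ⊢
    exact lt_of_le_of_lt (Fin.le_iff_val_le_val.1 (hocc.monotone hba)) ha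
  have hcard : #L = k - #(crossing k π) := by
    have h := card_filter_add_card_filter_not (s := univ)
      fun m => (occurrence hn τ π m : ℕ) < k
    rw [card_univ, Fintype.card_fin] at h
    rw [crossing_eq_image hn τ hπ, card_image_of_injective _ hocc.injective]
    simp only [not_lt] at h
    exact Nat.eq_sub_of_add_eq h
  rw [← hcard, ← Fin.mem_iff_lt_card_of_isLowerSet hL]
  simp [L]

theorem occurrence_eq_of_crossing_eq {π' : Perm (Fin n)} (hπ : π * π = 1) (hπ' : π' * π' = 1)
    (hocc : StrictMono (occurrence hn τ π)) (hocc' : StrictMono (occurrence hn τ π'))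
    (h : crossing k π = crossing k π') : occurrence hn τ π = occurrence hn τ π' := by
  rw [← hocc.range_inj hocc']
  ext x
  rw [mem_range_occurrence hπ, mem_range_occurrence hπ']
  by_cases hx : (x : ℕ) < k
  · obtain ⟨m, rfl⟩ := exists_castLE_apply_eq hn τ hx
    rw [← occurrence, ← occurrence, occurrence_lt_iff hπ hocc, occurrence_lt_iff hπ' hocc', h]
  · have hc : ∀ ρ : Perm (Fin n), (ρ x : ℕ) < k ↔ x ∈ crossing k ρ := fun ρ => by
      simp [crossing, not_lt.1 hx]
    rw [hc, hc, h]

theorem initPatternIsInvolution_of_strictMono_occurrence (hπ : π * π = 1)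
    (hocc : StrictMono (occurrence hn τ π)) :
    InitPatternIsInvolution τ (k - #(crossing k π)) := by
  set j := k - #(crossing k π)
  have hj : j ≤ k := Nat.sub_le _ _
  let u : Fin j → Fin n := fun a => Fin.castLE hn (τ (Fin.castLE hj a))
  let g : Fin j → Fin n := fun a => occurrence hn τ π (Fin.castLE hj a)
  have hu : Injective u := fun a b h =>
    Fin.castLE_injective hj (τ.injective (Fin.castLE_injective hn h))
  have hq : ∀ a, ∃ b, u b = g a := by
    intro a
    obtain ⟨m, hm⟩ :=
      exists_castLE_apply_eq hn τ ((occurrence_lt_iff hπ hocc (Fin.castLE hj a)).2 a.isLt)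
    have hmj : (m : ℕ) < j := by
      have hmu : occurrence hn τ π m = u a := by
        rw [occurrence, hm]
        exact Perm.apply_apply_of_mul_self hπ _
      rw [← occurrence_lt_iff hπ hocc, hmu]
      exact (τ _).isLt
    exact ⟨⟨m, hmj⟩, hm⟩
  -- `π` permutes the values `u a`; `q` records this permutation of `Fin j`
  choose q hq using hq
  have hgq : ∀ a, g (q a) = u a := fun a => by
    change π (u (q a)) = u a
    rw [hq]
    exact Perm.apply_apply_of_mul_self hπ _
  have hqq : Involutive q := fun a => hu (by rw [hq, hgq])
  refine ⟨hj, hqq.toPerm q, ?_, Equiv.ext hqq⟩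
  exact isPattern_of_apply_eq (Fin.strictMono_castLE hn) (hocc.comp (Fin.strictMono_castLE hj))
    fun a => (hgq a).symm

variable (hn) in
theorem exists_involution_crossing_eq {j : ℕ} (hj : InitPatternIsInvolution τ j)
    {C : Finset (Fin n)} (hCk : ∀ x ∈ C, k ≤ (x : ℕ)) (hC : #C = k - j) :
    ∃ ρ : Perm (Fin n), ρ * ρ = 1 ∧ StrictMono (occurrence hn τ ρ) ∧
      crossing k ρ = C := by
  obtain ⟨hjk, p, hpat, hp⟩ := hj
  have hg : StrictMono (targetOccurrence hn τ hjk p hC) := strictMono_targetOccurrence hCk hpat hp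
  obtain ⟨ρ, hρ, hρu⟩ := exists_involution_apply_eq
    (fun _ _ h => τ.injective (Fin.castLE_injective hn h)) hg.injective
    fun _ _ => castLE_apply_eq_targetOccurrence_comm hCk hp
  have hocc : occurrence hn τ ρ = targetOccurrence hn τ hjk p hC := funext hρu
  refine ⟨ρ, hρ, hocc ▸ hg, ?_⟩
  ext x
  rw [mem_crossing hn τ hρ, hocc, mem_range_targetOccurrence_iff hCk]

end Occurrence

section Counting

variable {k n : ℕ} {τ : Perm (Fin k)}

theorem mem_JFinset {j : ℕ} : j ∈ JFinset τ ↔ InitPatternIsInvolution τ j := by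
  simp only [JFinset, JSet, mem_filter, mem_range, Set.mem_union, Set.mem_singleton_iff]
  constructor
  · rintro ⟨-, rfl | ⟨-, hj⟩⟩
    · exact ⟨Nat.zero_le k, 1, fun a => a.elim0, Equiv.ext fun a => a.elim0⟩
    · exact hj
  · intro hj
    refine ⟨Nat.lt_succ_of_le hj.1, ?_⟩
    rcases Nat.eq_zero_or_pos j with rfl | hpos
    · exact Or.inl rfl
    · exact Or.inr ⟨hpos, hj⟩

theorem card_union_image_eq_add_card_crossing (hn : k ≤ n) {ρ : Perm (Fin n)}
    (hρ : ρ * ρ = 1) :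
    #(({x | (x : ℕ) < k} : Finset (Fin n)) ∪ ({x | (x : ℕ) < k} : Finset (Fin n)).image ρ)
      = k + #(crossing k ρ) := by
  have hunion :
      ({x | (x : ℕ) < k} : Finset (Fin n)) ∪ ({x | (x : ℕ) < k} : Finset (Fin n)).image ρ
        = ({x | (x : ℕ) < k} : Finset (Fin n)) ∪ crossing k ρ := by
    ext x
    have hx : x ∈ ({x | (x : ℕ) < k} : Finset (Fin n)).image ρ ↔ (ρ x : ℕ) < k := by
      rw [mem_image]
      constructor
      · rintro ⟨b, hb, rfl⟩
        rw [Perm.apply_apply_of_mul_self hρ]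
        exact (mem_filter.1 hb).2
      · exact fun hx =>
          ⟨ρ x, mem_filter.2 ⟨mem_univ _, hx⟩, Perm.apply_apply_of_mul_self hρ x⟩
    simp only [mem_union, hx, crossing, mem_filter, mem_univ, true_and]
    omega
  have hdisj : Disjoint ({x | (x : ℕ) < k} : Finset (Fin n)) (crossing k ρ) := by
    rw [disjoint_left]
    intro x hxB hxC
    simp only [crossing, mem_filter, mem_univ, true_and] at hxB hxC
    omega
  rw [hunion, card_union_of_disjoint hdisj, Fin.card_filter_val_lt, min_eq_right hn]

theorem containsSubseq_and_crossing_eq_iff (hn : k ≤ n) {π ρ : Perm (Fin n)} (hπ : π * π = 1)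
    (hρ : ρ * ρ = 1) (hρocc : StrictMono (occurrence hn τ ρ)) :
    ContainsSubseq π τ ∧ crossing k π = crossing k ρ
      ↔ ∀ b : Fin n, (b : ℕ) < k → π b = ρ b := by
  have hocc : (∀ b : Fin n, (b : ℕ) < k → π b = ρ b) ↔
      occurrence hn τ π = occurrence hn τ ρ := by
    rw [funext_iff]
    refine ⟨fun h m => h _ (τ m).isLt, fun h b hb => ?_⟩
    obtain ⟨m, rfl⟩ := exists_castLE_apply_eq hn τ hb
    exact h m
  rw [containsSubseq_iff_strictMono_occurrence hn hπ, hocc]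
  exact ⟨fun ⟨hπocc, hcr⟩ => occurrence_eq_of_crossing_eq hπ hρ hπocc hρocc hcr,
    fun h => ⟨h ▸ hρocc, crossing_eq_of_occurrence_eq hπ hρ h⟩⟩

theorem card_involutions_containing_crossing_eq (hn : k ≤ n) {j : ℕ}
    (hj : InitPatternIsInvolution τ j) {C : Finset (Fin n)} (hCk : ∀ x ∈ C, k ≤ (x : ℕ))
    (hC : #C = k - j) :
    #{π : Perm (Fin n) | π * π = 1 ∧ ContainsSubseq π τ ∧ crossing k π = C}
      = numInvolutions (n + j - 2 * k) := by
  obtain ⟨ρ, hρ, hρocc, rfl⟩ := exists_involution_crossing_eq hn hj hCk hC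
  have hcount := card_involutions_eqOn hρ ({x | (x : ℕ) < k} : Finset (Fin n))
  rw [card_union_image_eq_add_card_crossing hn hρ, hC, Fintype.card_fin] at hcount
  rw [show n + j - 2 * k = n - (k + (k - j)) by have := hj.1; omega, ← hcount]
  congr 1
  ext π
  simp only [mem_filter, mem_univ, true_and]
  exact and_congr_right fun hπ => containsSubseq_and_crossing_eq_iff hn hπ hρ hρocc

theorem card_involutions_containing_sub_card_crossing_eq (hn : k ≤ n) {j : ℕ}
    (hj : InitPatternIsInvolution τ j) :
    #{π : Perm (Fin n) | (π * π = 1 ∧ ContainsSubseq π τ) ∧ k - #(crossing k π) = j}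
      = (n - k).choose (k - j) * numInvolutions (n + j - 2 * k) := by
  let K : Finset (Fin n) := {x | k ≤ (x : ℕ)}
  have hK : #K = n - k := by
    have h := card_filter_add_card_filter_not (s := univ) fun x : Fin n => (x : ℕ) < k
    rw [card_univ, Fintype.card_fin, Fin.card_filter_val_lt, min_eq_right hn] at h
    simp only [not_lt] at h
    exact Nat.eq_sub_of_add_eq' h
  rw [card_eq_sum_card_fiberwise (f := crossing k) (t := powersetCard (k - j) K)]
  · rw [← hK, ← card_powersetCard, ← smul_eq_mul, ← sum_const]
    refine sum_congr rfl fun C hC => ?_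
    obtain ⟨hCK, hCcard⟩ := mem_powersetCard.1 hC
    rw [← card_involutions_containing_crossing_eq hn hj
      (fun x hx => (mem_filter.1 (hCK hx)).2) hCcard]
    congr 1
    ext π
    simp only [mem_filter, mem_univ, true_and]
    constructor
    · rintro ⟨⟨⟨hπ, hτ⟩, -⟩, hC⟩
      exact ⟨hπ, hτ, hC⟩
    · rintro ⟨hπ, hτ, rfl⟩
      exact ⟨⟨⟨hπ, hτ⟩, by have := hj.1; omega⟩, rfl⟩
  · intro π hπ
    simp only [mem_coe, mem_filter, mem_univ, true_and] at hπ
    rw [mem_coe, mem_powersetCard]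
    refine ⟨fun x hx => mem_filter.2 ⟨mem_univ x, (mem_filter.1 hx).2.1⟩, ?_⟩
    have := card_crossing_le k π
    omega

end Counting

theorem count_involutions_containing {k n : ℕ} (τ : Equiv.Perm (Fin k)) (hn : k ≤ n) :
    (Finset.univ.filter fun π : Equiv.Perm (Fin n) =>
        π * π = 1 ∧ ContainsSubseq π τ).card
      = ∑ j ∈ JFinset τ, Nat.choose (n - k) (k - j) * numInvolutions (n + j - 2 * k) := by
  rw [card_eq_sum_card_fiberwise (f := fun π => k - #(crossing k π)) (t := JFinset τ)]
  · refine sum_congr rfl fun j hj => ?_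
    rw [filter_filter]
    exact card_involutions_containing_sub_card_crossing_eq hn (mem_JFinset.1 hj)
  · intro π hπ
    obtain ⟨hπ, hτ⟩ := (mem_filter.1 hπ).2
    exact mem_JFinset.2 (initPatternIsInvolution_of_strictMono_occurrence hπ
      ((containsSubseq_iff_strictMono_occurrence hn hπ).1 hτ))
end

section
/- A permutation τ ∈ S_k is layered if and only if for every j ∈ {1,…,k} the pattern of τ_1…τ_j is an involution in S_j (equivalently, J(τ) = {0,1,…,k}). -/
open Equiv Finset

open scoped Classical

/-!
A layered permutation is an involution, and its first `j` entries are order-isomorphic to the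
layered permutation whose composition is the truncation of its own at total `j`.

Conversely, suppose the pattern of the first `j` entries is layered and the pattern `q` of the
first `j + 1` entries is an involution. The first `j` values of `q` keep their relative order, so
`q` is determined by `v = q (j + 1)`. Either `v = j + 1`, and a new block `[1]` is opened, or
`q v = j + 1`: then position `v` carries the largest of the first `j` values, so it starts the
last block, and `q` is layered with that block lengthened by one.
-/

/-- `layerVal c x` is the value (0-indexed) at position `x` of the layered permutation with
composition `c`, extended by the identity beyond `c.sum` so that it is an involution of `ℕ`. -/
def layerVal : List ℕ → ℕ → ℕ
  | [], x => x
  | a :: c, x => if x < a then a - 1 - x else a + layerVal c (x - a)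

theorem layerVal_involutive (c : List ℕ) : Function.Involutive (layerVal c) := by
  induction c with
  | nil => exact fun _ => rfl
  | cons a c ih =>
    intro x
    by_cases hx : x < a
    · simp only [layerVal, hx, if_true, show a - 1 - x < a by omega]
      omega
    · simp only [layerVal, hx, if_false, show ¬ a + layerVal c (x - a) < a by omega,
        Nat.add_sub_cancel_left, ih (x - a)]
      omega

theorem layerVal_of_sum_le {c : List ℕ} {x : ℕ} (hx : c.sum ≤ x) : layerVal c x = x := by
  induction c generalizing x with
  | nil => rfl
  | cons a c ih =>
    simp only [List.sum_cons] at hx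
    simp only [layerVal, show ¬ x < a by omega, if_false, ih (show c.sum ≤ x - a by omega)]
    omega

theorem layerVal_lt_sum {c : List ℕ} {x : ℕ} (hx : x < c.sum) : layerVal c x < c.sum := by
  by_contra! h
  have := layerVal_involutive c x
  rw [layerVal_of_sum_le h] at this
  omega

theorem layerVal_append (c d : List ℕ) (x : ℕ) :
    layerVal (c ++ d) x = if x < c.sum then layerVal c x else c.sum + layerVal d (x - c.sum) := by
  induction c generalizing x with
  | nil => simp
  | cons a c ih =>
    by_cases hx : x < a
    · simp [layerVal, hx, show x < a + c.sum by omega]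
    · simp only [List.cons_append, layerVal, hx, if_false, ih, List.sum_cons, Nat.sub_sub]
      split_ifs <;> omega

theorem layerVal_append_one (c : List ℕ) : layerVal (c ++ [1]) = layerVal c := by
  funext x
  rw [layerVal_append]
  split_ifs with hx
  · rfl
  · simp only [layerVal, layerVal_of_sum_le (le_of_not_gt hx)]
    split_ifs <;> omega

theorem layerVal_append_singleton (d : List ℕ) {m i : ℕ} (hi : i < m) :
    layerVal (d ++ [m]) (d.sum + i) = d.sum + m - 1 - i := by
  simp only [layerVal_append, add_lt_iff_neg_left, not_lt_zero, ↓reduceIte, layerVal,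
    add_tsub_cancel_left, hi]
  omega

theorem layerVal_append_succ (d : List ℕ) {b y : ℕ} (hy : y < d.sum + b) :
    layerVal (d ++ [b + 1]) y = if layerVal (d ++ [b]) y < d.sum then layerVal (d ++ [b]) y
      else layerVal (d ++ [b]) y + 1 := by
  by_cases hyd : y < d.sum
  · have := layerVal_lt_sum hyd
    simp [layerVal_append, hyd, this]
  · obtain ⟨i, rfl⟩ := Nat.exists_eq_add_of_le (not_lt.mp hyd)
    rw [layerVal_append_singleton d (by omega : i < b + 1),
      layerVal_append_singleton d (by omega : i < b)]
    split_ifs <;> omega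

theorem exists_layerVal_le_iff_of_le_sum (c : List ℕ) {j : ℕ} (hj : j ≤ c.sum) :
    ∃ c' : List ℕ, c'.sum = j ∧ ∀ x < j, ∀ y < j,
      (layerVal c' x ≤ layerVal c' y ↔ layerVal c x ≤ layerVal c y) := by
  induction c generalizing j with
  | nil =>
    obtain rfl : j = 0 := by simpa using hj
    exact ⟨[], rfl, fun x hx => (Nat.not_lt_zero x hx).elim⟩
  | cons a c ih =>
    simp only [List.sum_cons] at hj
    by_cases hja : j ≤ a
    · refine ⟨[j], by simp, fun x hx y hy => ?_⟩
      simp only [layerVal, hx, hy, show x < a by omega, show y < a by omega, if_true]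
      omega
    · obtain ⟨c', hc', hle⟩ := ih (j := j - a) (by omega)
      refine ⟨a :: c', by simp only [List.sum_cons, hc']; omega, fun x hx y hy => ?_⟩
      simp only [layerVal]
      split_ifs with hxa hya
      · omega
      · omega
      · omega
      · have := hle (x - a) (by omega) (y - a) (by omega)
        omega

theorem length_layersFrom (s : ℕ) (c : List ℕ) : (layersFrom s c).length = c.sum := by
  induction c generalizing s with
  | nil => rfl
  | cons a c ih => simp [layersFrom, ih]

theorem getElem_layersFrom (s : ℕ) (c : List ℕ) (x : ℕ) (hx : x < (layersFrom s c).length) :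
    (layersFrom s c)[x] = s + layerVal c x + 1 := by
  induction c generalizing s x with
  | nil => simp [layersFrom] at hx
  | cons a c ih =>
    by_cases h : x < a
    · simp only [layersFrom]
      rw [List.getElem_append_left (by simpa using h)]
      simp [layerVal, h]
    · simp only [layersFrom]
      rw [List.getElem_append_right (by simpa using h)]
      simp [ih, layerVal, h, add_assoc]

def layerPerm {n : ℕ} (c : List ℕ) (hc : c.sum = n) : Perm (Fin n) :=
  Function.Involutive.toPerm (fun x => ⟨layerVal c x, by subst hc; exact layerVal_lt_sum x.2⟩)
    fun x => Fin.ext (layerVal_involutive c x)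

@[simp]
theorem layerPerm_apply_val {n : ℕ} (c : List ℕ) (hc : c.sum = n) (x : Fin n) :
    (layerPerm c hc x : ℕ) = layerVal c x :=
  rfl

theorem layerPerm_mul_self {n : ℕ} (c : List ℕ) (hc : c.sum = n) :
    layerPerm c hc * layerPerm c hc = 1 :=
  Equiv.ext fun x => Fin.ext (layerVal_involutive c x)

theorem isLayered_iff {k : ℕ} (τ : Perm (Fin k)) :
    IsLayered τ ↔
      ∃ c : List ℕ, (∀ a ∈ c, 0 < a) ∧ ∃ hc : c.sum = k, τ = layerPerm c hc := by
  refine exists_congr fun c => and_congr_right fun _ => ?_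
  constructor
  · rintro ⟨hc, hτ⟩
    refine ⟨hc, Equiv.ext fun x => Fin.ext ?_⟩
    have := List.getElem_of_eq hτ (i := x) (by simp)
    simpa [getElem_layersFrom] using this
  · rintro ⟨hc, rfl⟩
    refine ⟨hc, List.ext_getElem (by simp [length_layersFrom, hc]) fun i hi _ => ?_⟩
    simp [getElem_layersFrom]

theorem Fin.val_succAbove {n : ℕ} (p : Fin (n + 1)) (i : Fin n) :
    (p.succAbove i : ℕ) = if (i : ℕ) < p then (i : ℕ) else i + 1 := by
  unfold Fin.succAbove
  split_ifs <;> simp_all [Fin.lt_def]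

theorem IsPattern.lt_iff_lt {j : ℕ} {α : Type*} [LinearOrder α] {w : Fin j → α}
    {p : Perm (Fin j)} (h : IsPattern w p) (a b : Fin j) : p a < p b ↔ w a < w b := by
  simpa only [lt_iff_not_ge] using (h b a).not

theorem IsPattern.eq_of_perm {n : ℕ} {σ τ : Perm (Fin n)} (h : IsPattern τ σ) : σ = τ := by
  have hmono : StrictMono (σ ∘ τ.symm) := fun a b hab =>
    (h.lt_iff_lt _ _).mpr (by simpa using hab)
  have := (hmono.range_inj strictMono_id).mp (by simp [Set.range_comp])
  exact Equiv.ext fun x => by simpa using congrFun this (τ x)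

theorem IsPattern.apply_castSucc_eq_succAbove {j : ℕ} {q : Perm (Fin (j + 1))} {σ : Perm (Fin j)}
    (h : IsPattern (fun a => q a.castSucc) σ) (x : Fin j) :
    q x.castSucc = (q (Fin.last j)).succAbove (σ x) := by
  have hmono : StrictMono fun y => q (σ.symm y).castSucc := fun a b hab =>
    (h.lt_iff_lt _ _).mp (by simpa using hab)
  have hrange : Set.range (fun y => q (σ.symm y).castSucc) = {q (Fin.last j)}ᶜ := by
    ext y
    simp only [Set.mem_range, Set.mem_compl_singleton_iff]
    constructor
    · rintro ⟨z, rfl⟩ hz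
      exact Fin.castSucc_ne_last _ (q.injective hz)
    · intro hy
      obtain ⟨z, hz⟩ :=
        Fin.exists_castSucc_eq.mpr fun h => hy (by rw [← h, q.apply_symm_apply])
      exact ⟨σ z, by simp [hz]⟩
  have := (hmono.range_inj (Fin.strictMono_succAbove _)).mp (by rw [hrange, Fin.range_succAbove])
  simpa using congrFun this (σ x)

theorem exists_layerPerm_eq_of_isPattern_castSucc {j : ℕ} {q : Perm (Fin (j + 1))}
    (hq : q * q = 1) {c : List ℕ} (hpos : ∀ a ∈ c, 0 < a) (hc : c.sum = j)
    (hpat : IsPattern (fun a => q a.castSucc) (layerPerm c hc)) :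
    ∃ c' : List ℕ, (∀ a ∈ c', 0 < a) ∧
      ∃ hc' : c'.sum = j + 1, q = layerPerm c' hc' := by
  have hsucc := hpat.apply_castSucc_eq_succAbove
  rcases (q (Fin.last j)).eq_castSucc_or_eq_last with ⟨v, hv⟩ | hlast
  · have hvtop : (q v.castSucc : ℕ) = j := by
      rw [← hv, ← Perm.mul_apply, hq, Perm.one_apply, Fin.val_last]
    rw [hsucc, hv, Fin.val_succAbove, layerPerm_apply_val, Fin.val_castSucc] at hvtop
    obtain ⟨d, b, rfl⟩ :=
      c.eq_nil_or_concat'.resolve_left (by rintro rfl; subst hc; exact v.elim0)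
    have hb : 0 < b := hpos b (by simp)
    have hdb : d.sum + b = j := by simpa using hc
    have hvd : (v : ℕ) = d.sum := by
      have hstart := layerVal_append_singleton d (i := 0) hb
      rw [add_zero] at hstart
      refine (layerVal_involutive (d ++ [b])).injective ?_
      split_ifs at hvtop <;> omega
    refine ⟨d ++ [b + 1], ?_, by simp only [List.sum_append, List.sum_cons, List.sum_nil]; omega,
      Equiv.ext fun x => Fin.ext ?_⟩
    · simp only [List.mem_append, List.mem_singleton, or_imp, forall_and, forall_eq] at hpos ⊢
      exact ⟨hpos.1, b.succ_pos⟩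
    induction x using Fin.lastCases with
    | last =>
      have hend := layerVal_append_singleton d (show b < b + 1 by omega)
      simp only [hv, Fin.val_castSucc, Fin.val_last, layerPerm_apply_val, ← hdb, hend]
      omega
    | cast y =>
      rw [hsucc, hv, Fin.val_succAbove, layerPerm_apply_val, layerPerm_apply_val,
        layerVal_append_succ d (by simp only [Fin.val_castSucc]; omega)]
      simp [hvd]
  · refine ⟨c ++ [1], by simpa [or_imp, forall_and] using hpos, by simp [hc],
      Equiv.ext fun x => Fin.ext ?_⟩
    rw [layerPerm_apply_val, layerVal_append_one]
    induction x using Fin.lastCases with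
    | last => rw [hlast, Fin.val_last, layerVal_of_sum_le hc.le]
    | cast y => simp [hsucc, hlast]

theorem initPatternIsInvolution_layerPerm {k : ℕ} (c : List ℕ) (hc : c.sum = k) {j : ℕ}
    (hj : j ≤ k) : InitPatternIsInvolution (layerPerm c hc) j := by
  obtain ⟨c', hc', hle⟩ := exists_layerVal_le_iff_of_le_sum c (hc ▸ hj)
  exact ⟨hj, layerPerm c' hc', fun a b => by simpa [Fin.le_def] using hle a a.2 b b.2,
    layerPerm_mul_self c' hc'⟩

theorem exists_layerPerm_isPattern_of_initPatternIsInvolution {k : ℕ} {τ : Perm (Fin k)}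
    (hτ : ∀ j, 1 ≤ j → j ≤ k → InitPatternIsInvolution τ j) {j : ℕ} (hj : j ≤ k) :
    ∃ c : List ℕ, (∀ a ∈ c, 0 < a) ∧ ∃ hc : c.sum = j,
      IsPattern (fun m : Fin j => τ (Fin.castLE hj m)) (layerPerm c hc) := by
  induction j with
  | zero => exact ⟨[], by simp, rfl, fun a => a.elim0⟩
  | succ j ih =>
    obtain ⟨c, hpos, hc, hpat⟩ := ih (by omega)
    obtain ⟨_, q, hq, hqq⟩ := hτ (j + 1) (by omega) hj
    obtain ⟨c', hpos', hc', rfl⟩ := exists_layerPerm_eq_of_isPattern_castSucc hqq hpos hc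
      fun a b => (hpat a b).trans (hq a.castSucc b.castSucc).symm
    exact ⟨c', hpos', hc', hq⟩

theorem jSet_eq_iff {k : ℕ} (τ : Perm (Fin k)) :
    JSet τ = {j | j ≤ k} ↔ ∀ j, 1 ≤ j → j ≤ k → InitPatternIsInvolution τ j := by
  refine ⟨fun h j hj hjk => ?_, fun h => Set.ext fun j => ⟨?_, fun hjk => ?_⟩⟩
  · obtain rfl | ⟨-, hI⟩ : j ∈ JSet τ := h ▸ hjk
    · omega
    · exact hI
  · rintro (rfl | ⟨-, hjk, -⟩)
    exacts [Nat.zero_le k, hjk]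
  · rcases Nat.eq_zero_or_pos j with rfl | hj
    exacts [Or.inl rfl, Or.inr ⟨hj, h j hj hjk⟩]

theorem layered_iff_full_jset {k : ℕ} (τ : Equiv.Perm (Fin k)) :
    IsLayered τ ↔ JSet τ = {j | j ≤ k} := by
  rw [isLayered_iff, jSet_eq_iff]
  constructor
  · rintro ⟨c, -, hc, rfl⟩ j - hj
    exact initPatternIsInvolution_layerPerm c hc hj
  · intro h
    obtain ⟨c, hpos, hc, hpat⟩ := exists_layerPerm_isPattern_of_initPatternIsInvolution h le_rfl
    exact ⟨c, hpos, hc, hpat.eq_of_perm.symm⟩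
end

section
/- Given a layered permutation τ ∈ S_k with k ≥ 2, there is a unique involution σ ∈ S_{k+2} whose length-k initial pattern equals τ and whose length-(k+1) initial pattern is not an involution. -/
open Equiv Finset

open scoped Classical

/-!
A permutation in `S_{n+1}` is determined by its last value and the pattern of its first `n`
entries. Hence the candidates are `σ = (τ.extendLast c).extendLast b`: append to `τ` a last entry
of rank `c`, giving the pattern `q` of the length-`(k+1)` prefix, then a last entry of rank `b`.

Let the last layer of `τ` occupy the positions `[u, k)`. Then `q` is an involution exactly when
`c = u` or `c = k`, for then it is again layered. For any other `c`, evaluating `σ² = 1` at the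
last two positions forces `b = u`, and then `c = k - 1` if the last layer has at least two
elements, or `c = τ (k - 2)`, the start of the second-to-last layer, if it is a singleton.
Conversely, these parameters give an involution, checked on the untouched layers and, explicitly,
on the remaining tail.
-/

section Pattern

variable {j : ℕ} {α β : Type*} [LinearOrder α] [LinearOrder β]

lemma StrictMono.isPattern_comp_iff {f : α → β} (hf : StrictMono f) (w : Fin j → α)
    (p : Perm (Fin j)) : IsPattern (fun m => f (w m)) p ↔ IsPattern w p := by
  simp only [IsPattern, hf.le_iff_le]

lemma IsPattern.unique {w : Fin j → α} {p q : Perm (Fin j)} (hp : IsPattern w p)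
    (hq : IsPattern w q) : p = q := by
  let e : Fin j ≃o Fin j :=
    ⟨p.symm.trans q, fun {a b} => by
      simpa using (hq (p.symm a) (p.symm b)).trans (hp (p.symm a) (p.symm b)).symm⟩
  ext1 a
  simpa [e] using (congrArg (· (p a)) (Subsingleton.elim e (OrderIso.refl _))).symm

end Pattern

namespace Equiv.Perm

variable {n : ℕ}

/-- The permutation whose first `n` entries have pattern `π` and whose last entry is `c`. -/
def extendLast (π : Perm (Fin n)) (c : Fin (n + 1)) : Perm (Fin (n + 1)) :=
  (finSuccEquiv' (Fin.last n)).trans (π.optionCongr.trans (finSuccEquiv' c).symm)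

@[simp]
lemma extendLast_castSucc (π : Perm (Fin n)) (c : Fin (n + 1)) (i : Fin n) :
    extendLast π c i.castSucc = c.succAbove (π i) := by
  simp [extendLast, finSuccEquiv'_last_apply_castSucc]

@[simp]
lemma extendLast_last (π : Perm (Fin n)) (c : Fin (n + 1)) :
    extendLast π c (Fin.last n) = c := by
  simp [extendLast]

def deleteLast (σ : Perm (Fin (n + 1))) : Perm (Fin n) :=
  removeNone ((finSuccEquiv' (Fin.last n)).symm.trans (σ.trans (finSuccEquiv' (σ (Fin.last n)))))

lemma extendLast_deleteLast (σ : Perm (Fin (n + 1))) :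
    extendLast (deleteLast σ) (σ (Fin.last n)) = σ := by
  ext1 x
  induction x using Fin.lastCases with
  | last => simp
  | cast i =>
    have hne : σ (Fin.last n) ≠ σ i.castSucc := σ.injective.ne (Fin.castSucc_lt_last i).ne'
    obtain ⟨j, hj⟩ := Fin.exists_succAbove_eq hne.symm
    have hsome := removeNone_some
      ((finSuccEquiv' (Fin.last n)).symm.trans (σ.trans (finSuccEquiv' (σ (Fin.last n)))))
      (x := i) ⟨j, by simp [← hj]⟩
    simp only [trans_apply, finSuccEquiv'_symm_some, Fin.succAbove_last_apply, ← hj,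
      finSuccEquiv'_succAbove, Option.some_inj] at hsome
    simp [deleteLast, hsome, hj]

lemma isPattern_extendLast (π : Perm (Fin n)) (c : Fin (n + 1)) :
    IsPattern (fun i : Fin n => extendLast π c i.castSucc) π := by
  simpa only [extendLast_castSucc] using
    ((Fin.strictMono_succAbove c).isPattern_comp_iff π π).2 fun _ _ => Iff.rfl

lemma eq_extendLast_of_isPattern {σ : Perm (Fin (n + 1))} {ρ : Perm (Fin n)}
    (hρ : IsPattern (fun i : Fin n => σ i.castSucc) ρ) :
    σ = extendLast ρ (σ (Fin.last n)) := by
  have h := isPattern_extendLast (deleteLast σ) (σ (Fin.last n))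
  rw [extendLast_deleteLast] at h
  rw [hρ.unique h, extendLast_deleteLast]

lemma isPattern_extendLast_extendLast (π : Perm (Fin n)) (c : Fin (n + 1)) (b : Fin (n + 2)) :
    IsPattern (fun i : Fin n => extendLast (extendLast π c) b i.castSucc.castSucc) π := by
  simpa only [extendLast_castSucc] using
    ((Fin.strictMono_succAbove b).isPattern_comp_iff _ π).2 (isPattern_extendLast π c)

lemma eq_extendLast_extendLast_of_isPattern {σ : Perm (Fin (n + 2))} {π : Perm (Fin n)}
    (hπ : IsPattern (fun i : Fin n => σ i.castSucc.castSucc) π) :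
    σ = extendLast (extendLast π (deleteLast σ (Fin.last n))) (σ (Fin.last (n + 1))) := by
  have hσ := (extendLast_deleteLast σ).symm
  rw [hσ] at hπ
  simp only [extendLast_castSucc] at hπ
  rw [← eq_extendLast_of_isPattern (((Fin.strictMono_succAbove _).isPattern_comp_iff _ π).1 hπ)]
  exact hσ

end Equiv.Perm

/-! The case analysis runs on `ℕ`-valued shadows of permutations, as linear arithmetic. -/

def natSuccAbove (c t : ℕ) : ℕ := if t < c then t else t + 1

def natExtendLast (F : ℕ → ℕ) (n c i : ℕ) : ℕ := if i < n then natSuccAbove c (F i) else c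

lemma natExtendLast_of_lt {F : ℕ → ℕ} {n c i : ℕ} (hi : i < n) :
    natExtendLast F n c i = natSuccAbove c (F i) :=
  if_pos hi

lemma natExtendLast_self (F : ℕ → ℕ) (n c : ℕ) : natExtendLast F n c n = c :=
  if_neg (lt_irrefl n)

lemma Fin.val_succAbove_s18 {n : ℕ} (c : Fin (n + 1)) (i : Fin n) :
    (c.succAbove i : ℕ) = natSuccAbove c i := by
  unfold Fin.succAbove natSuccAbove
  split_ifs <;> simp_all [Fin.lt_def]

namespace Equiv.Perm

variable {n : ℕ}

def natFun (σ : Perm (Fin n)) (i : ℕ) : ℕ := if h : i < n then σ ⟨i, h⟩ else i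

lemma natFun_val (σ : Perm (Fin n)) (i : Fin n) : natFun σ i = σ i := by
  simp [natFun]

lemma mul_self_eq_one_iff_of_natFun_eq {σ : Perm (Fin n)} {F : ℕ → ℕ}
    (hF : ∀ i < n, natFun σ i = F i) : σ * σ = 1 ↔ ∀ i < n, F (F i) = i := by
  have key : ∀ i : Fin n, F (F i) = σ (σ i) := fun i => by
    rw [← hF i i.isLt, natFun_val, ← hF _ (σ i).isLt, natFun_val]
  rw [Perm.ext_iff, Fin.forall_iff]
  refine forall₂_congr fun i hi => ?_
  simpa [Fin.ext_iff] using (congrArg (· = i) (key ⟨i, hi⟩)).symm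

lemma natFun_extendLast {π : Perm (Fin n)} {F : ℕ → ℕ} (hF : ∀ i < n, natFun π i = F i)
    (c : Fin (n + 1)) : ∀ i < n + 1, natFun (extendLast π c) i = natExtendLast F n c i := by
  intro i hi
  obtain ⟨i, rfl⟩ : ∃ x : Fin (n + 1), (x : ℕ) = i := ⟨⟨i, hi⟩, rfl⟩
  rw [natFun_val]
  induction i using Fin.lastCases with
  | last => simp [natExtendLast]
  | cast i => simp [natExtendLast, Fin.val_succAbove_s18, ← hF i i.isLt, natFun_val]

end Equiv.Perm

def RevOn (T : ℕ → ℕ) (s e : ℕ) : Prop := ∀ j, s ≤ j → j < e → T j = s + e - 1 - j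

def LayeredOn (T : ℕ → ℕ) (k : ℕ) : Prop :=
  ∀ i < k, ∃ s e, s ≤ i ∧ i < e ∧ e ≤ k ∧ RevOn T s e

namespace LayeredOn

variable {T : ℕ → ℕ} {k : ℕ}

lemma apply_lt_and_apply_apply (hT : LayeredOn T k) {i : ℕ} (hi : i < k) :
    T i < k ∧ T (T i) = i := by
  obtain ⟨s, e, hsi, hie, hek, hrev⟩ := hT i hi
  have h := hrev i hsi hie
  have h' := hrev (T i) (by omega) (by omega)
  omega

lemma exists_revOn (hT : LayeredOn T k) (hk : 0 < k) : ∃ u < k, RevOn T u k := by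
  obtain ⟨s, e, hs, he, hek, hrev⟩ := hT (k - 1) (by omega)
  obtain rfl : e = k := by omega
  exact ⟨s, by omega, hrev⟩

lemma of_revOn (hT : LayeredOn T k) {u : ℕ} (hu : u < k) (hrev : RevOn T u k) :
    LayeredOn T u := by
  intro i hi
  obtain ⟨s, e, hsi, hie, hek, hrev'⟩ := hT i (by omega)
  refine ⟨s, e, hsi, hie, ?_, hrev'⟩
  by_contra! hue
  have h := hrev u le_rfl hu
  have h' := hrev' u (by omega) hue
  omega

end LayeredOn

lemma layersFrom_exists_block (s : ℕ) (comp : List ℕ) {i : ℕ} (hi : i < comp.sum) :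
    ∃ t e, t ≤ i ∧ i < e ∧ e ≤ comp.sum ∧
      ∀ j, t ≤ j → j < e → (layersFrom s comp)[j]? = some (s + t + e - j) := by
  induction comp generalizing s i with
  | nil => simp at hi
  | cons a rest ih =>
    rw [List.sum_cons] at hi
    by_cases hia : i < a
    · refine ⟨0, a, Nat.zero_le _, hia, by simp, fun j _ hj => ?_⟩
      rw [layersFrom, List.getElem?_append_left (by simpa using hj)]
      simp only [List.map_reverse, List.length_reverse, List.length_map, List.length_range, hj,
        getElem?_pos, List.getElem_reverse, List.getElem_map, List.getElem_range, add_zero,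
        Option.some.injEq]
      omega
    · obtain ⟨t, e, hti, hie, he, hval⟩ := ih (s + a) (i := i - a) (by omega)
      refine ⟨t + a, e + a, by omega, by omega, by rw [List.sum_cons]; omega,
        fun j htj hje => ?_⟩
      have hlen : ((List.range a).reverse.map fun t => s + t + 1).length = a := by
        simp only [List.length_map, List.length_reverse, List.length_range]
      rw [layersFrom, List.getElem?_append_right (by omega), hlen,
        hval (j - a) (by omega) (by omega)]
      congr 1
      omega

lemma IsLayered.layeredOn {k : ℕ} {τ : Perm (Fin k)} (hτ : IsLayered τ) :
    LayeredOn τ.natFun k := by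
  obtain ⟨comp, -, hsum, hofFn⟩ := hτ
  intro i hi
  obtain ⟨t, e, hti, hie, hek, hval⟩ := layersFrom_exists_block 0 comp (i := i) (by omega)
  refine ⟨t, e, hti, hie, by omega, fun j htj hje => ?_⟩
  have h := hval j htj hje
  rw [← hofFn, List.getElem?_ofFn] at h
  simp only [Perm.natFun, show j < k by omega, dite_true, zero_add, Option.some.injEq] at h ⊢
  omega

section Classification

variable {T : ℕ → ℕ} {k u c b : ℕ}

lemma apply_apply_of_glue {S G : ℕ → ℕ} {s n : ℕ} (hT : LayeredOn T s)
    (hlow : ∀ i < s, S i = T i) (hhigh : ∀ i, s ≤ i → i < n → S i = G i)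
    (hG : ∀ i, s ≤ i → i < n → s ≤ G i ∧ G i < n ∧ G (G i) = i) :
    ∀ i < n, S (S i) = i := by
  intro i hi
  by_cases his : i < s
  · obtain ⟨hlt, hTT⟩ := hT.apply_lt_and_apply_apply his
    rw [hlow i his, hlow _ hlt, hTT]
  · obtain ⟨h1, h2, h3⟩ := hG i (by omega) hi
    rw [hhigh i (by omega) hi, hhigh _ h1 h2, h3]

lemma natExtendLast_apply_apply (hT : LayeredOn T k) (hu : u < k) (hrev : RevOn T u k)
    (hc : c = u ∨ c = k) : ∀ i < k + 1, natExtendLast T k c (natExtendLast T k c i) = i := by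
  rcases hc with rfl | rfl
  · have hTc := hT.of_revOn hu hrev
    refine apply_apply_of_glue (G := fun i => c + k - i) hTc (fun i hi => ?_)
      (fun i hci hik => ?_) (fun i _ _ => by omega)
    · rw [natExtendLast_of_lt (by omega), natSuccAbove,
        if_pos (hTc.apply_lt_and_apply_apply hi).1]
    · rcases Nat.lt_succ_iff_lt_or_eq.1 hik with hik | rfl
      · rw [natExtendLast_of_lt hik, natSuccAbove, hrev i hci hik, if_neg (by omega)]
        omega
      · rw [natExtendLast_self]
        omega
  · refine apply_apply_of_glue (G := fun i => i) hT (fun i hi => ?_)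
      (fun i hci hik => ?_) (fun i h1 h2 => ⟨h1, h2, rfl⟩)
    · rw [natExtendLast_of_lt hi, natSuccAbove, if_pos (hT.apply_lt_and_apply_apply hi).1]
    · rw [show i = c by omega, natExtendLast_self]

lemma eq_or_eq_of_natExtendLast_apply_apply (hT : LayeredOn T k) (hu : u < k)
    (hrev : RevOn T u k) (hc : c ≤ k)
    (h : natExtendLast T k c (natExtendLast T k c k) = k) : c = u ∨ c = k := by
  rw [natExtendLast_self] at h
  refine (lt_or_eq_of_le hc).imp_left fun hck => ?_
  obtain ⟨hTc, hTTc⟩ := hT.apply_lt_and_apply_apply hck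
  rw [natExtendLast_of_lt hck, natSuccAbove] at h
  have hTc' : T c = k - 1 := by split_ifs at h <;> omega
  have := hrev (k - 1) (by omega) (by omega)
  rw [← hTTc, hTc']
  omega

lemma natExtendLast_natExtendLast_of_lt {i : ℕ} (hi : i < k + 2) :
    natExtendLast (natExtendLast T k c) (k + 1) b i =
      if i < k then natSuccAbove b (natSuccAbove c (T i))
      else if i = k then natSuccAbove b c else b := by
  unfold natExtendLast
  split_ifs <;> first | rfl | omega

lemma eq_of_natExtendLast_natExtendLast_apply_apply (hT : LayeredOn T k) (hk : 2 ≤ k)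
    (hu : u < k) (hrev : RevOn T u k) (hc : c ≤ k) (hcu : c ≠ u) (hck : c ≠ k)
    (hSk : natExtendLast (natExtendLast T k c) (k + 1) b
      (natExtendLast (natExtendLast T k c) (k + 1) b k) = k)
    (hSk1 : natExtendLast (natExtendLast T k c) (k + 1) b
      (natExtendLast (natExtendLast T k c) (k + 1) b (k + 1)) = k + 1) :
    c = (if u + 2 ≤ k then k - 1 else T (k - 2)) ∧ b = u := by
  set S := natExtendLast (natExtendLast T k c) (k + 1) b
  have hS : ∀ i < k, S i = natSuccAbove b (natSuccAbove c (T i)) := fun i hi => by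
    simp only [S]; rw [natExtendLast_natExtendLast_of_lt (by omega), if_pos hi]
  have hTk1 : T (k - 1) = u := by have := hrev (k - 1) (by omega) (by omega); omega
  rw [show S (k + 1) = b from natExtendLast_self _ _ _] at hSk1
  rw [show S k = natSuccAbove b c by
    simp only [S]; rw [natExtendLast_natExtendLast_of_lt (by omega), if_neg (lt_irrefl k),
      if_pos rfl]] at hSk
  have hck' : c < k := lt_of_le_of_ne hc hck
  have hbk : b < k := by
    by_contra hbk
    rw [natSuccAbove, if_pos (by omega), hS c hck'] at hSk
    obtain ⟨hTc, hTTc⟩ := hT.apply_lt_and_apply_apply hck'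
    have : T c = k - 1 := by simp only [natSuccAbove] at hSk; split_ifs at hSk <;> omega
    exact hcu (by rw [← hTTc, this, hTk1])
  obtain rfl : b = u := by
    rw [hS b hbk] at hSk1
    obtain ⟨hTb, hTTb⟩ := hT.apply_lt_and_apply_apply hbk
    have : T b = k - 1 := by simp only [natSuccAbove] at hSk1; split_ifs at hSk1 <;> omega
    rw [← hTTb, this, hTk1]
  refine ⟨?_, rfl⟩
  -- unless `σ k = k`, the equation `σ (σ k) = k` forces `τ (σ k) = k - 2`
  by_cases hck1 : c = k - 1
  · rw [if_pos (by omega), hck1]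
  have hak : natSuccAbove b c < k := by unfold natSuccAbove; split_ifs <;> omega
  rw [hS _ hak] at hSk
  obtain ⟨-, hTTa⟩ := hT.apply_lt_and_apply_apply hak
  have hTa : T (natSuccAbove b c) = k - 2 := by
    simp only [natSuccAbove] at hSk ⊢; split_ifs at hSk ⊢ <;> omega
  split_ifs with hb2
  · have := hrev (k - 2) (by omega) (by omega)
    rw [hTa, show T (k - 2) = b + 1 by omega] at hTTa
    unfold natSuccAbove at hTTa
    split_ifs at hTTa <;> omega
  · rw [← hTa, hTTa, natSuccAbove, if_pos (by omega)]

lemma natExtendLast_natExtendLast_apply_apply_of_add_two_le (hT : LayeredOn T k)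
    (hu : u + 2 ≤ k) (hrev : RevOn T u k) :
    ∀ i < k + 2, natExtendLast (natExtendLast T k (k - 1)) (k + 1) u
      (natExtendLast (natExtendLast T k (k - 1)) (k + 1) u i) = i := by
  have hTu := hT.of_revOn (by omega) hrev
  refine apply_apply_of_glue hTu (fun i hi => ?_) (fun i hui hik => ?_)
    (G := fun i => if i = u then k + 1 else if i < k then u + k - i else if i = k then k else u)
    (fun i _ _ => by split_ifs <;> omega)
  · have := (hTu.apply_lt_and_apply_apply hi).1
    rw [natExtendLast_natExtendLast_of_lt (by omega), if_pos (by omega)]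
    simp only [natSuccAbove]
    split_ifs <;> omega
  · rw [natExtendLast_natExtendLast_of_lt hik]
    by_cases hik' : i < k
    · have := hrev i hui hik'
      simp only [natSuccAbove]
      split_ifs <;> omega
    · simp only [natSuccAbove]
      split_ifs <;> omega

lemma natExtendLast_natExtendLast_apply_apply_of_add_one_eq (hT : LayeredOn T k)
    (hk : 2 ≤ k) (hu : u + 1 = k) (hrev : RevOn T u k) :
    ∀ i < k + 2, natExtendLast (natExtendLast T k (T (k - 2))) (k + 1) u
      (natExtendLast (natExtendLast T k (T (k - 2))) (k + 1) u i) = i := by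
  subst hu
  have hTu := hT.of_revOn (by omega) hrev
  obtain ⟨v, hv, hrev'⟩ := hTu.exists_revOn (by omega)
  have hTv := hTu.of_revOn hv hrev'
  have hTu' : T u = u := by have := hrev u le_rfl (by omega); omega
  have hTv' : T (u - 1) = v := by have := hrev' (u - 1) (by omega) (by omega); omega
  rw [show u + 1 - 2 = u - 1 by omega, hTv']
  refine apply_apply_of_glue hTv (fun i hi => ?_) (fun i hvi hik => ?_)
    (G := fun i => if i = v then u + 1 else if i < u then v + u - i
      else if i = u then u + 2 else if i = u + 1 then v else u)
    (fun i _ _ => by split_ifs <;> omega)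
  · have := (hTv.apply_lt_and_apply_apply hi).1
    rw [natExtendLast_natExtendLast_of_lt (by omega), if_pos (by omega)]
    simp only [natSuccAbove]
    split_ifs <;> omega
  · rw [natExtendLast_natExtendLast_of_lt hik]
    rcases lt_trichotomy i u with hiu | rfl | hiu
    · have := hrev' i hvi hiu
      simp only [natSuccAbove]
      split_ifs <;> omega
    · simp only [natSuccAbove, hTu']
      split_ifs <;> omega
    · simp only [natSuccAbove]
      split_ifs <;> omega

lemma natExtendLast_natExtendLast_involution_iff (hT : LayeredOn T k) (hk : 2 ≤ k) (hu : u < k)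
    (hrev : RevOn T u k) (hc : c ≤ k) :
    ((∀ i < k + 2, natExtendLast (natExtendLast T k c) (k + 1) b
        (natExtendLast (natExtendLast T k c) (k + 1) b i) = i) ∧
      ¬ ∀ i < k + 1, natExtendLast T k c (natExtendLast T k c i) = i) ↔
      c = (if u + 2 ≤ k then k - 1 else T (k - 2)) ∧ b = u := by
  constructor
  · rintro ⟨hS, hQ⟩
    have hcu : c ≠ u ∧ c ≠ k := by
      rw [← not_or]
      exact fun h => hQ (natExtendLast_apply_apply hT hu hrev h)
    exact eq_of_natExtendLast_natExtendLast_apply_apply hT hk hu hrev hc hcu.1 hcu.2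
      (hS k (by omega)) (hS (k + 1) (by omega))
  · rintro ⟨rfl, rfl⟩
    refine ⟨?_, fun hQ => ?_⟩
    · split_ifs with hb2
      · exact natExtendLast_natExtendLast_apply_apply_of_add_two_le hT hb2 hrev
      · exact natExtendLast_natExtendLast_apply_apply_of_add_one_eq hT hk (by omega) hrev
    have hcu := eq_or_eq_of_natExtendLast_apply_apply hT hu hrev hc (hQ k (by omega))
    split_ifs at hcu with hb2
    · omega
    obtain ⟨hTk2, hTTk2⟩ := hT.apply_lt_and_apply_apply (i := k - 2) (by omega)
    obtain rfl : k = b + 1 := by omega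
    have hTb := hrev b le_rfl (by omega)
    rcases hcu with h | h
    · rw [h, hTb] at hTTk2
      omega
    · omega

end Classification

lemma existsUnique_extendLast_extendLast {k : ℕ} (hk : 2 ≤ k) (τ : Perm (Fin k))
    (hτ : IsLayered τ) :
    ∃! cb : Fin (k + 1) × Fin (k + 2),
      (τ.extendLast cb.1).extendLast cb.2 * (τ.extendLast cb.1).extendLast cb.2 = 1 ∧
        ¬ τ.extendLast cb.1 * τ.extendLast cb.1 = 1 := by
  have hT := hτ.layeredOn
  obtain ⟨u, hu, hrev⟩ := hT.exists_revOn (by omega)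
  set c₀ := if u + 2 ≤ k then k - 1 else τ.natFun (k - 2)
  have hc₀ : c₀ < k + 1 := by
    have := (hT.apply_lt_and_apply_apply (i := k - 2) (by omega)).1
    simp only [c₀]; split_ifs <;> omega
  have key : ∀ (c : Fin (k + 1)) (b : Fin (k + 2)),
      ((τ.extendLast c).extendLast b * (τ.extendLast c).extendLast b = 1 ∧
        ¬ τ.extendLast c * τ.extendLast c = 1) ↔ (c : ℕ) = c₀ ∧ (b : ℕ) = u := by
    intro c b
    have hQ := Perm.natFun_extendLast (π := τ) (F := τ.natFun) (fun _ _ => rfl) c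
    rw [Perm.mul_self_eq_one_iff_of_natFun_eq (Perm.natFun_extendLast hQ b),
      Perm.mul_self_eq_one_iff_of_natFun_eq hQ]
    exact natExtendLast_natExtendLast_involution_iff hT hk hu hrev (by omega)
  refine ⟨(⟨c₀, hc₀⟩, ⟨u, by omega⟩), (key _ _).2 ⟨rfl, rfl⟩, fun cb hcb => ?_⟩
  obtain ⟨hc, hb⟩ := (key cb.1 cb.2).1 hcb
  ext <;> simp [hc, hb]

theorem unique_extension_kplus2 {k : ℕ} (hk : 2 ≤ k) (τ : Equiv.Perm (Fin k))
    (hτ : IsLayered τ) :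
    ∃! σ : Equiv.Perm (Fin (k + 2)),
      σ * σ = 1 ∧
      IsPattern (fun m : Fin k => σ (Fin.castLE (by omega) m)) τ ∧
      ¬ ∃ p : Equiv.Perm (Fin (k + 1)),
          IsPattern (fun m : Fin (k + 1) => σ (Fin.castSucc m)) p ∧ p * p = 1 := by
  obtain ⟨⟨c, b⟩, ⟨hσ, hq⟩, huniq⟩ := existsUnique_extendLast_extendLast hk τ hτ
  refine ⟨(τ.extendLast c).extendLast b,
    ⟨hσ, Perm.isPattern_extendLast_extendLast τ c b, ?_⟩, ?_⟩
  · rintro ⟨p, hp, hpp⟩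
    exact hq ((Perm.isPattern_extendLast _ b).unique hp ▸ hpp)
  · rintro σ ⟨hσσ, hpat, hnot⟩
    obtain ⟨c', b', rfl⟩ : ∃ c' b', σ = (τ.extendLast c').extendLast b' :=
      ⟨_, _, Perm.eq_extendLast_extendLast_of_isPattern hpat⟩
    obtain ⟨rfl, rfl⟩ := Prod.ext_iff.1 <| huniq (c', b')
      ⟨hσσ, fun h => hnot ⟨_, Perm.isPattern_extendLast _ b', h⟩⟩
    rfl
end
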